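/- arXiv:1204.2057 — 2 statements merged into one kernel-verified Lean document; each statement's English description precedes it below -/
import Mathlib

section
/- Let X be a compact Hausdorff space, E a nonzero Banach space, φ a homeomorphism of X, τ : X → G(E) strongly continuous, and T the weighted composition operator (Tf)(x) = τ(x)(f(φ(x))) on C(X,E). If T^n = I, then φ^n(x) = x for all x ∈ X. -/
/-!
If `φ^[n] x ≠ x`, pick `f ∈ C(X, E)` with `f x ≠ 0` and `f (φ^[n] x) = 0`, which is possible
because compact Hausdorff spaces are completely regular and `E ≠ 0`. The value `(T ^ n) f x`
only depends on `f (φ^[n] x)`, linearly, so it vanishes, whereas `T ^ n = 1` forces it to be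
`f x ≠ 0`.
-/

theorem ContinuousMap.exists_apply_eq_and_apply_eq_zero
    {X : Type*} [TopologicalSpace X] [T35Space X]
    {E : Type*} [TopologicalSpace E] [AddCommGroup E] [Module ℝ E] [ContinuousSMul ℝ E]
    {x y : X} (hxy : x ≠ y) (e : E) : ∃ f : C(X, E), f x = e ∧ f y = 0 := by
  obtain ⟨g, hg, hgy, hgx⟩ :=
    CompletelyRegularSpace.completely_regular y {x} isClosed_singleton hxy.symm
  refine ⟨⟨fun z => (g z : ℝ) • e, (continuous_subtype_val.comp hg).smul continuous_const⟩,
    ?_, ?_⟩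
  · simp [hgx (Set.mem_singleton x)]
  · simp [hgy]

theorem weightedComposition_pow_apply_eq_zero
    {X : Type*} [TopologicalSpace X]
    {R : Type*} [Semiring R]
    {E : Type*} [TopologicalSpace E] [AddCommMonoid E] [ContinuousAdd E] [Module R E]
    [ContinuousConstSMul R E]
    {φ : X → X} {τ : X → E →L[R] E}
    {T : C(X, E) →L[R] C(X, E)} (hT : ∀ (f : C(X, E)) (x : X), T f x = τ x (f (φ x)))
    (k : ℕ) {f : C(X, E)} {x : X} (hf : f (φ^[k] x) = 0) : (T ^ k) f x = 0 := by
  induction k generalizing f with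
  | zero => simpa using hf
  | succ k ih =>
    rw [pow_succ, mul_apply_eq_comp]
    refine ih ?_
    rw [hT, ← Function.iterate_succ_apply' φ, hf, map_zero]

theorem homeomorphism_periodic_of_pow_eq_one_general
    {X : Type*} [TopologicalSpace X] [CompactSpace X] [T2Space X]
    {E : Type*} [NormedAddCommGroup E] [NormedSpace ℝ E] [Nontrivial E]
    (φ : X ≃ₜ X) (τ : X → E →L[ℝ] E)
    (T : C(X, E) →L[ℝ] C(X, E)) (hT : ∀ (f : C(X, E)) (x : X), T f x = τ x (f (φ x)))
    (n : ℕ) (hTn : T ^ n = 1) :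
    ∀ x : X, (⇑φ)^[n] x = x := by
  intro x
  by_contra hx
  obtain ⟨e, he⟩ := exists_ne (0 : E)
  obtain ⟨f, hfx, hfφx⟩ := ContinuousMap.exists_apply_eq_and_apply_eq_zero (Ne.symm hx) e
  have h := weightedComposition_pow_apply_eq_zero hT n hfφx
  rw [hTn, one_apply_eq_self, hfx] at h
  exact he h

theorem homeomorphism_periodic_of_pow_eq_one
    {X : Type*} [TopologicalSpace X] [CompactSpace X] [T2Space X]
    {E : Type*} [NormedAddCommGroup E] [NormedSpace ℝ E] [CompleteSpace E] [Nontrivial E]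
    (φ : X ≃ₜ X) (τ : X → E →L[ℝ] E)
    (hτ_isom : ∀ x, Isometry (τ x)) (hτ_surj : ∀ x, Function.Surjective (τ x))
    (hτ_cont : ∀ e : E, Continuous fun x => τ x e)
    (T : C(X, E) →L[ℝ] C(X, E)) (hT : ∀ (f : C(X, E)) (x : X), T f x = τ x (f (φ x)))
    (n : ℕ) (hTn : T ^ n = 1) :
    ∀ x : X, (⇑φ)^[n] x = x :=
  homeomorphism_periodic_of_pow_eq_one_general φ τ T hT n hTn
end

section
/- Let E be a normed space. If the set G²(E) = {T ∈ B(E) : T a surjective isometry, T² = I} is algebraically reflexive, then the set of projections P ∈ B(E) such that 2P − I is a surjective isometry (generalized bi-circular projections with λ = −1) is algebraically reflexive. -/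
/-!
`P ↦ 2P - 1` maps the generalized bi-circular projections with `λ = -1` exactly onto
`G²(E)`, because `(2P - 1)² = 1 ↔ P² = P`. Since `(2P - 1) e` only depends on `P e`, this map
carries local membership in the first set to local membership in `G²(E)`, so reflexivity of
`G²(E)` pulls back.
-/

/-- The algebraic closure of a set of bounded operators. -/
def algClosure {E : Type*} [NormedAddCommGroup E] [NormedSpace ℝ E]
    (S : Set (E →L[ℝ] E)) : Set (E →L[ℝ] E) :=
  {T | ∀ e : E, ∃ Te ∈ S, T e = Te e}

theorem sq_two_smul_sub_one_eq_one_iff {𝕜 R : Type*} [Field 𝕜] [NeZero (2 : 𝕜)] [Ring R]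
    [Algebra 𝕜 R] (q : R) : ((2 : 𝕜) • q - 1) ^ 2 = 1 ↔ q ^ 2 = q := by
  have hexpand : ((2 : 𝕜) • q - 1) ^ 2 = (4 : 𝕜) • (q ^ 2 - q) + 1 := by
    simp only [Algebra.smul_def, map_ofNat]
    noncomm_ring
  have h4 : (4 : 𝕜) ≠ 0 := by
    simpa [show (4 : 𝕜) = 2 * 2 by norm_num] using (NeZero.ne (2 : 𝕜))
  rw [hexpand, add_eq_right, smul_eq_zero, sub_eq_zero]
  simp [h4]

section algClosure

variable {E : Type*} [NormedAddCommGroup E] [NormedSpace ℝ E]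

theorem subset_algClosure (S : Set (E →L[ℝ] E)) : S ⊆ algClosure S :=
  fun T hT _ => ⟨T, hT, rfl⟩

theorem algClosure_preimage_subset (Φ : (E →L[ℝ] E) → (E →L[ℝ] E))
    (hΦ : ∀ T U e, T e = U e → Φ T e = Φ U e) (S : Set (E →L[ℝ] E)) :
    algClosure (Φ ⁻¹' S) ⊆ Φ ⁻¹' algClosure S := by
  intro T hT e
  obtain ⟨Te, hTe, hTee⟩ := hT e
  exact ⟨Φ Te, hTe, hΦ T Te e hTee⟩

theorem algClosure_preimage_eq_of_algClosure_eq (Φ : (E →L[ℝ] E) → (E →L[ℝ] E))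
    (hΦ : ∀ T U e, T e = U e → Φ T e = Φ U e) {S : Set (E →L[ℝ] E)}
    (hS : algClosure S = S) : algClosure (Φ ⁻¹' S) = Φ ⁻¹' S := by
  refine (algClosure_preimage_subset Φ hΦ S).trans ?_ |>.antisymm (subset_algClosure _)
  rw [hS]

end algClosure

theorem gbp_eq_preimage_G2 {E : Type*} [NormedAddCommGroup E] [NormedSpace ℝ E] :
    {P : E →L[ℝ] E | P ^ 2 = P ∧ Isometry ⇑((2 : ℝ) • P - 1) ∧
        Function.Surjective ⇑((2 : ℝ) • P - 1)} =
      (fun P => (2 : ℝ) • P - 1) ⁻¹'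
        {T : E →L[ℝ] E | Isometry T ∧ Function.Surjective T ∧ T ^ 2 = 1} := by
  ext P
  simp only [Set.mem_ofPred_eq, Set.mem_preimage, sq_two_smul_sub_one_eq_one_iff]
  tauto

theorem gbp_reflexive_of_G2_reflexive {E : Type*} [NormedAddCommGroup E] [NormedSpace ℝ E]
    (G2 : Set (E →L[ℝ] E))
    (hG2 : G2 = {T : E →L[ℝ] E | Isometry T ∧ Function.Surjective T ∧ T ^ 2 = 1})
    (hrefl : algClosure G2 = G2) :
    algClosure {P : E →L[ℝ] E | P ^ 2 = P ∧ Isometry ⇑((2 : ℝ) • P - 1) ∧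
        Function.Surjective ⇑((2 : ℝ) • P - 1)} =
      {P : E →L[ℝ] E | P ^ 2 = P ∧ Isometry ⇑((2 : ℝ) • P - 1) ∧
        Function.Surjective ⇑((2 : ℝ) • P - 1)} := by
  subst hG2
  rw [gbp_eq_preimage_G2]
  exact algClosure_preimage_eq_of_algClosure_eq _ (fun T U e h => by simp [h]) hrefl
end
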